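/- arXiv:2312.03765 — 2 statements merged into one kernel-verified Lean document; each statement's English description precedes it below -/
import Mathlib

section
/- Let X be a perfectly normal topological space (every closed set is Gδ, equivalently every open set is Fσ), A ⊆ X both Fσ and Gδ, and g : X \ A → A continuous. Define φ : X → X by φ(x) = x on A and φ(x) = g(x) on X \ A. Then φ is of the first Borel class: the preimage under φ of every open subset of X is Fσ. -/
open Set Filter Topology

def IsFSigma {X : Type*} [TopologicalSpace X] (s : Set X) : Prop :=
  ∃ F : ℕ → Set X, (∀ n, IsClosed (F n)) ∧ s = ⋃ n, F n

def FirstBorelClass {X Y : Type*} [TopologicalSpace X] [TopologicalSpace Y] (f : X → Y) : Prop :=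
  ∀ U : Set Y, IsOpen U → IsFSigma (f ⁻¹' U)

lemma IsFSigma.union {X : Type*} [TopologicalSpace X] {s t : Set X}
    (hs : IsFSigma s) (ht : IsFSigma t) : IsFSigma (s ∪ t) := by
  obtain ⟨F, hF, rfl⟩ := hs
  obtain ⟨G, hG, rfl⟩ := ht
  refine ⟨fun n => F n ∪ G n, fun n => (hF n).union (hG n), ?_⟩
  ext x; simp [mem_iUnion, or_and_right, exists_or]

lemma IsFSigma.inter {X : Type*} [TopologicalSpace X] {s t : Set X}
    (hs : IsFSigma s) (ht : IsFSigma t) : IsFSigma (s ∩ t) := by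
  obtain ⟨F, hF, rfl⟩ := hs
  obtain ⟨G, hG, rfl⟩ := ht
  refine ⟨fun n => F (Nat.unpair n).1 ∩ G (Nat.unpair n).2,
    fun n => (hF _).inter (hG _), ?_⟩
  ext x
  simp only [mem_inter_iff, mem_iUnion]
  constructor
  · rintro ⟨⟨n, hn⟩, ⟨m, hm⟩⟩
    exact ⟨Nat.pair n m, by simp [Nat.unpair_pair, hn, hm]⟩
  · rintro ⟨n, hn, hm⟩
    exact ⟨⟨_, hn⟩, ⟨_, hm⟩⟩

lemma isFSigma_compl_of_isGδ {X : Type*} [TopologicalSpace X] {s : Set X}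
    (h : IsGδ s) : IsFSigma sᶜ := by
  obtain ⟨f, hf, rfl⟩ := h.eq_iInter_nat
  refine ⟨fun n => (f n)ᶜ, fun n => (hf n).isClosed_compl, ?_⟩
  simp [compl_iInter]

theorem retraction_firstBorelClass {X : Type*} [TopologicalSpace X]
    (hX : ∀ U : Set X, IsOpen U → IsFSigma U) (A : Set X)
    (hFσ : IsFSigma A) (hGδ : IsGδ A)
    (g : X → X) (hg : ContinuousOn g Aᶜ) (hgA : MapsTo g Aᶜ A)
    (φ : X → X) (hφ₁ : ∀ x ∈ A, φ x = x) (hφ₂ : ∀ x ∉ A, φ x = g x) :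
    FirstBorelClass φ := by
  intro U hU
  have hpre : φ ⁻¹' U = (A ∩ U) ∪ (Aᶜ ∩ g ⁻¹' U) := by
    ext x
    by_cases hx : x ∈ A
    · simp [mem_preimage, hφ₁ x hx, hx]
    · simp [mem_preimage, hφ₂ x hx, hx]
  rw [hpre]
  -- first part
  have h1 : IsFSigma (A ∩ U) := hFσ.inter (hX U hU)
  -- second part: g⁻¹ U ∩ Aᶜ is open in Aᶜ
  obtain ⟨V, hV, hVeq⟩ := (continuousOn_iff'.mp hg) U hU
  have h2 : IsFSigma (Aᶜ ∩ g ⁻¹' U) := by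
    have : Aᶜ ∩ g ⁻¹' U = Aᶜ ∩ V := by
      rw [inter_comm Aᶜ (g ⁻¹' U), hVeq, inter_comm]
    rw [this]
    exact (isFSigma_compl_of_isGδ hGδ).inter (hX V hV)
  exact h1.union h2
end

section
/- Let A ⊆ ℝ be both Fσ and Gδ, and g : ℝ \ A → A continuous. Define φ : ℝ → ℝ by φ(x) = x for x ∈ A and φ(x) = g(x) otherwise. Then φ is a Baire-one function: there exists a sequence of continuous functions φₙ : ℝ → ℝ converging pointwise to φ. -/
open Set Filter Topology

/-!
Write `A = ⋃ Pₙ` and `Aᶜ = ⋃ Qₙ` as increasing unions of closed sets (`A` is Fσ, and its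
complement is Fσ because `A` is Gδ). On the closed set `Pₙ ∪ Qₙ` the function `φ` is continuous,
being the identity on `Pₙ` and `g` on `Qₙ`, so Tietze extends it to a continuous `φₙ` on `ℝ`.
Every `x` lies in `Pₙ ∪ Qₙ` for all large `n`, hence `φₙ x` is eventually equal to `φ x`.
-/

universe u v

theorem isClosed_accumulate {X : Type*} [TopologicalSpace X] {F : ℕ → Set X}
    (hF : ∀ n, IsClosed (F n)) (n : ℕ) : IsClosed (accumulate F n) := by
  rw [accumulate_eq_biInter_lt]
  exact (finite_lt_nat _).isClosed_biUnion fun k _ => hF k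

theorem eventually_mem_accumulate {β : Type*} {F : ℕ → Set β} {x : β} (hx : x ∈ ⋃ n, F n) :
    ∀ᶠ n in atTop, x ∈ accumulate F n := by
  obtain ⟨k, hk⟩ := mem_iUnion.1 hx
  filter_upwards [eventually_ge_atTop k] with n hn using mem_accumulate.2 ⟨k, hn, hk⟩

theorem IsFSigma.exists_closed_exhaustion {X : Type*} [TopologicalSpace X] {s : Set X}
    (hs : IsFSigma s) :
    ∃ P : ℕ → Set X, (∀ n, IsClosed (P n)) ∧ (∀ n, P n ⊆ s) ∧
      ∀ x ∈ s, ∀ᶠ n in atTop, x ∈ P n := by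
  obtain ⟨F, hF, rfl⟩ := hs
  exact ⟨accumulate F, isClosed_accumulate hF, accumulate_subset_iUnion,
    fun _ => eventually_mem_accumulate⟩

theorem IsGδ.isFSigma_compl {X : Type*} [TopologicalSpace X] {s : Set X} (hs : IsGδ s) :
    IsFSigma sᶜ := by
  obtain ⟨U, hU, rfl⟩ := hs.eq_iInter_nat
  exact ⟨fun n => (U n)ᶜ, fun n => (hU n).isClosed_compl, compl_iInter U⟩

theorem exists_tendsto_of_continuousOn_eventually_mem_isClosed {X : Type u} {Y : Type v}
    [TopologicalSpace X] [NormalSpace X] [TopologicalSpace Y] [TietzeExtension.{u, v} Y]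
    {f : X → Y} {S : ℕ → Set X} (hS : ∀ n, IsClosed (S n)) (hf : ∀ n, ContinuousOn f (S n))
    (hcover : ∀ x, ∀ᶠ n in atTop, x ∈ S n) :
    ∃ fs : ℕ → C(X, Y), ∀ x, Tendsto (fun n => fs n x) atTop (𝓝 (f x)) := by
  have hext : ∀ n, ∃ ψ : C(X, Y), ∀ x ∈ S n, ψ x = f x := fun n => by
    obtain ⟨ψ, hψ⟩ := ContinuousMap.exists_restrict_eq (hS n)
      ⟨(S n).domRestrict f, (hf n).domRestrict⟩
    exact ⟨ψ, fun x hx => DFunLike.congr_fun hψ ⟨x, hx⟩⟩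
  choose fs hfs using hext
  refine ⟨fs, fun x => tendsto_const_nhds.congr' ?_⟩
  filter_upwards [hcover x] with n hn using (hfs n x hn).symm

theorem retraction_baire_one_general (A : Set ℝ)
    (hFσ : IsFSigma A) (hGδ : IsGδ A)
    (g : ℝ → ℝ) (hg : ContinuousOn g Aᶜ)
    (φ : ℝ → ℝ) (hφ₁ : ∀ x ∈ A, φ x = x) (hφ₂ : ∀ x ∉ A, φ x = g x) :
    ∃ φₙ : ℕ → ℝ → ℝ, (∀ n, Continuous (φₙ n)) ∧
      ∀ x, Tendsto (fun n => φₙ n x) atTop (𝓝 (φ x)) := by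
  obtain ⟨P, hPc, hPA, hP⟩ := hFσ.exists_closed_exhaustion
  obtain ⟨Q, hQc, hQA, hQ⟩ := hGδ.isFSigma_compl.exists_closed_exhaustion
  have hφP : ∀ n, ContinuousOn φ (P n) := fun n =>
    continuousOn_id.congr fun x hx => hφ₁ x (hPA n hx)
  have hφQ : ∀ n, ContinuousOn φ (Q n) := fun n =>
    (hg.mono (hQA n)).congr fun x hx => hφ₂ x (hQA n hx)
  have hcover : ∀ x, ∀ᶠ n in atTop, x ∈ P n ∪ Q n := fun x => by
    by_cases hx : x ∈ A
    · exact (hP x hx).mono fun _ => Or.inl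
    · exact (hQ x hx).mono fun _ => Or.inr
  obtain ⟨ψ, hψ⟩ := exists_tendsto_of_continuousOn_eventually_mem_isClosed
    (fun n => (hPc n).union (hQc n))
    (fun n => (hφP n).union_of_isClosed (hφQ n) (hPc n) (hQc n)) hcover
  exact ⟨fun n => ψ n, fun n => (ψ n).continuous, hψ⟩

theorem retraction_baire_one (A : Set ℝ)
    (hFσ : IsFSigma A) (hGδ : IsGδ A)
    (g : ℝ → ℝ) (hg : ContinuousOn g Aᶜ) (hgA : MapsTo g Aᶜ A)
    (φ : ℝ → ℝ) (hφ₁ : ∀ x ∈ A, φ x = x) (hφ₂ : ∀ x ∉ A, φ x = g x) :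
    ∃ φₙ : ℕ → ℝ → ℝ, (∀ n, Continuous (φₙ n)) ∧
      ∀ x, Tendsto (fun n => φₙ n x) atTop (𝓝 (φ x)) :=
  retraction_baire_one_general A hFσ hGδ g hg φ hφ₁ hφ₂
end
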